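/- Let K be a field of characteristic 2, A a commutative associative unital K-algebra, and α: A × A → K an alternating bilinear map satisfying α(ab,c) + α(ca,b) + α(bc,a) = 0. Then the bilinear map Φ on the current algebra S ⊗ A (S the 3-dimensional simple Lie algebra) defined by Φ(e⊗a, f⊗b) = α(a,b), Φ(f⊗b, e⊗a) = α(a,b), Φ(h⊗a, h⊗b) = α(a,b), and zero on other basis pairs, is a 2-cocycle with trivial coefficients. -/
import Mathlib


/-- The bracket of the current Lie algebra `S ⊗ A` identified with
`Fin 3 → A` (coordinates with respect to `e, h, f`). -/
def SbrA (A : Type*) [CommRing A] (x y : Fin 3 → A) : Fin 3 → A :=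
  ![x 0 * y 1 + x 1 * y 0, x 0 * y 2 + x 2 * y 0, x 2 * y 1 + x 1 * y 2]

/-- Let `α : A × A → K` be an alternating bilinear map satisfying the cyclic
cocycle condition. The bilinear map `Φ` on `S ⊗ A` with
`Φ(e⊗a, f⊗b) = Φ(f⊗b, e⊗a) = α(a,b)`, `Φ(h⊗a, h⊗b) = α(a,b)` and zero on
other basis pairs (in coordinates:
`Φ(u,v) = α(u₀,v₂) + α(v₀,u₂) + α(u₁,v₁)`) is a 2-cocycle with trivial
coefficients. -/
theorem stmt16 (K : Type*) [Field K] [CharP K 2]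
    (A : Type*) [CommRing A] [Algebra K A]
    (α : A →ₗ[K] A →ₗ[K] K)
    (halt : ∀ a : A, α a a = 0)
    (hcyc : ∀ a b c : A, α (a * b) c + α (c * a) b + α (b * c) a = 0) :
    ∀ u v w : Fin 3 → A,
      (α ((SbrA A u v) 0) (w 2) + α (w 0) ((SbrA A u v) 2)
        + α ((SbrA A u v) 1) (w 1))
      + (α ((SbrA A w u) 0) (v 2) + α (v 0) ((SbrA A w u) 2)
        + α ((SbrA A w u) 1) (v 1))
      + (α ((SbrA A v w) 0) (u 2) + α (u 0) ((SbrA A v w) 2)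
        + α ((SbrA A v w) 1) (u 1)) = 0 := by
  have hsym : ∀ a b : A, α a b = α b a := by
    intro a b
    have h := halt (a + b)
    simp only [map_add, LinearMap.add_apply, halt] at h
    have h2 : α a b + α b a = 0 := by linear_combination h
    have h3 : -(α b a) = α b a := CharTwo.neg_eq _
    linear_combination h2 + h3
  intro u v w
  simp only [SbrA, Matrix.cons_val_zero, Matrix.cons_val_one, Matrix.head_cons,
    Matrix.cons_val_two, Matrix.tail_cons, map_add, LinearMap.add_apply]
  linear_combination hcyc (u 0) (v 1) (w 2) + hcyc (u 0) (v 2) (w 1)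
    + hcyc (v 0) (w 2) (u 1) + hcyc (v 0) (w 1) (u 2)
    + hcyc (w 0) (u 1) (v 2) + hcyc (w 0) (u 2) (v 1)
    + hsym (u 0) (v 1 * w 2) + hsym (u 0) (v 2 * w 1)
    + hsym (v 0) (w 2 * u 1) + hsym (v 0) (w 1 * u 2)
    + hsym (w 0) (u 1 * v 2) + hsym (w 0) (u 2 * v 1)
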